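/- arXiv:2605.08090 — 3 statements merged into one kernel-verified Lean document; each statement's English description precedes it below -/
import Mathlib

section
/- Let k be a field, let n ≥ 3, and suppose the off-diagonal entries of an n×n matrix satisfy the rank-1 ansatz u_{ij} = α_i β_j for all i ≠ j, with all α_i, β_j ∈ k nonzero. Then ∑_{σ ∈ D_n} sgn(σ) ∏_{i=1}^n u_{i,σ(i)} = (∏_i α_i)(∏_j β_j) · (n-1)(-1)^{n-1}. In particular, if the characteristic of k does not divide n-1, this derangement sum is nonzero. -/
open Finset Equiv

lemma det_offdiag_aux {k : Type*} [Field k] (n : ℕ) (α β : Fin n → k) :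
    (Matrix.of fun i j : Fin n => if i = j then (0:k) else α i * β j).det
      = (∏ i, α i) * (∏ j, β j) * ((-1) ^ n * (1 - (n : k))) := by
  have hM : (Matrix.of fun i j : Fin n => if i = j then (0:k) else α i * β j)
      = Matrix.diagonal α *
        (-(1 - Matrix.replicateCol Unit (fun _ : Fin n => (1:k)) * Matrix.replicateRow Unit (fun _ => (1:k)))) *
        Matrix.diagonal β := by
    ext i j
    by_cases h : i = j <;>
      simp [Matrix.mul_apply, Matrix.diagonal, Matrix.one_apply, h] <;> ring
  rw [hM, Matrix.det_mul, Matrix.det_mul, Matrix.det_diagonal, Matrix.det_diagonal,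
    Matrix.det_neg]
  have hdet : (1 - Matrix.replicateCol Unit (fun _ : Fin n => (1:k)) * Matrix.replicateRow Unit (fun _ => (1:k))).det
      = 1 - (n:k) := by
    have h := Matrix.det_one_add_replicateCol_mul_replicateRow (ι := Unit) (fun _ : Fin n => (-1:k))
      (fun _ : Fin n => (1:k))
    have hneg : -(Matrix.replicateCol Unit (fun _ : Fin n => (1:k)) * Matrix.replicateRow Unit (fun _ => (1:k)))
        = Matrix.replicateCol Unit (fun _ : Fin n => (-1:k)) * Matrix.replicateRow Unit (fun _ : Fin n => (1:k)) := by
      ext i j; simp [Matrix.mul_apply]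
    rw [sub_eq_add_neg, hneg, h]
    simp [dotProduct, Finset.sum_const]
    ring
  rw [hdet]
  simp [Fintype.card_fin]
  ring

/-- If the off-diagonal entries of an `n × n` array over a field satisfy the rank-1 ansatz
`u i j = α i * β j` for `i ≠ j` with all `α i, β j` nonzero, then the signed derangement sum
equals `(∏ α)(∏ β) · (n-1)·(-1)^(n-1)`; in particular it is nonzero when `char k ∤ n - 1`. -/
theorem rank_one_derangement_sum {k : Type*} [Field k] (n : ℕ) (hn : 3 ≤ n)
    (u : Fin n → Fin n → k) (α β : Fin n → k)
    (hα : ∀ i, α i ≠ 0) (hβ : ∀ j, β j ≠ 0)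
    (hu : ∀ i j, i ≠ j → u i j = α i * β j) :
    (∑ σ ∈ Finset.univ.filter (fun σ : Equiv.Perm (Fin n) => ∀ i, σ i ≠ i),
        (((Equiv.Perm.sign σ : ℤˣ) : ℤ) : k) * ∏ i, u i (σ i))
      = (∏ i, α i) * (∏ j, β j) * (((n : k) - 1) * (-1) ^ (n - 1)) ∧
    (¬ (ringChar k ∣ (n - 1)) →
      (∑ σ ∈ Finset.univ.filter (fun σ : Equiv.Perm (Fin n) => ∀ i, σ i ≠ i),
        (((Equiv.Perm.sign σ : ℤˣ) : ℤ) : k) * ∏ i, u i (σ i)) ≠ 0) := by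
  set M : Matrix (Fin n) (Fin n) k :=
    Matrix.of fun i j => if i = j then (0:k) else α i * β j with hMdef
  have hsum : (∑ σ ∈ Finset.univ.filter (fun σ : Equiv.Perm (Fin n) => ∀ i, σ i ≠ i),
        (((Equiv.Perm.sign σ : ℤˣ) : ℤ) : k) * ∏ i, u i (σ i)) = M.det := by
    rw [← Matrix.det_transpose, Matrix.det_apply]
    rw [← Finset.sum_filter_add_sum_filter_not Finset.univ
      (fun σ : Equiv.Perm (Fin n) => ∀ i, σ i ≠ i)]
    have h2 : ∑ σ ∈ Finset.univ.filter
        (fun σ : Equiv.Perm (Fin n) => ¬ ∀ i, σ i ≠ i),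
        Equiv.Perm.sign σ • ∏ i, M.transpose (σ i) i = 0 := by
      apply Finset.sum_eq_zero
      intro σ hσ
      simp only [Finset.mem_filter, not_forall, not_ne_iff] at hσ
      obtain ⟨i, hi⟩ := hσ.2
      have : M.transpose (σ i) i = 0 := by simp [hMdef, Matrix.transpose_apply, hi]
      have hz : (∏ j, M.transpose (σ j) j) = 0 :=
        Finset.prod_eq_zero (Finset.mem_univ i) this
      rw [hz, smul_zero]
    rw [h2, add_zero]
    apply Finset.sum_congr rfl
    intro σ hσ
    simp only [Finset.mem_filter] at hσ
    rw [Units.smul_def, zsmul_eq_mul]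
    push_cast
    congr 1
    apply Finset.prod_congr rfl
    intro i _
    have hne : σ i ≠ i := hσ.2 i
    simp [hMdef, Matrix.transpose_apply, Ne.symm hne, hu i (σ i) (Ne.symm hne)]
  have hdet := det_offdiag_aux n α β
  have hval : (∑ σ ∈ Finset.univ.filter (fun σ : Equiv.Perm (Fin n) => ∀ i, σ i ≠ i),
        (((Equiv.Perm.sign σ : ℤˣ) : ℤ) : k) * ∏ i, u i (σ i))
      = (∏ i, α i) * (∏ j, β j) * (((n : k) - 1) * (-1) ^ (n - 1)) := by
    rw [hsum, hdet]
    have hp : (-1:k) ^ n = (-1) ^ (n - 1) * (-1) := by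
      conv_lhs => rw [← Nat.succ_pred_eq_of_pos (by omega : 0 < n)]
      rw [pow_succ, Nat.pred_eq_sub_one]
    rw [hp]; ring
  refine ⟨hval, fun hchar => ?_⟩
  rw [hval]
  have h1 : ((n:k) - 1) = ((n - 1 : ℕ) : k) := by
    rw [Nat.cast_sub (by omega : 1 ≤ n)]; simp
  have hm : ((n - 1 : ℕ) : k) ≠ 0 := by
    rw [Ne, ringChar.spec]; exact hchar
  apply mul_ne_zero
  apply mul_ne_zero
  · exact Finset.prod_ne_zero_iff.mpr fun i _ => hα i
  · exact Finset.prod_ne_zero_iff.mpr fun j _ => hβ j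
  · exact mul_ne_zero (h1 ▸ hm) (pow_ne_zero _ (by norm_num))
end

section
/- Let k be a field, n ≥ 4, and let u_{ij} ∈ k* be given for all ordered pairs i ≠ j in {1,...,n}. Suppose that for all distinct i, j and all distinct a, b with {i,j} ∩ {a,b} = ∅ one has u_{ia}·u_{jb} = u_{ib}·u_{ja}. Then there exist α_1,...,α_n ∈ k* and β_1,...,β_n ∈ k* such that u_{ij} = α_i·β_j for all i ≠ j. -/
set_option maxHeartbeats 1000000


/-- If every admissible off-diagonal `2×2` rectangle (disjoint row and column index pairs) has
trivial cross-ratio, then the off-diagonal array factors as `u i j = α i * β j` with nonzero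
factors. -/
theorem offdiag_rank_one_factorization {k : Type*} [Field k] (n : ℕ) (hn : 4 ≤ n)
    (u : Fin n → Fin n → k) (hu : ∀ i j, i ≠ j → u i j ≠ 0)
    (hflat : ∀ i j a b : Fin n, i ≠ j → a ≠ b →
      i ≠ a → i ≠ b → j ≠ a → j ≠ b →
      u i a * u j b = u i b * u j a) :
    ∃ α β : Fin n → k, (∀ i, α i ≠ 0) ∧ (∀ j, β j ≠ 0) ∧
      ∀ i j, i ≠ j → u i j = α i * β j := by
  set i0 : Fin n := ⟨0, by omega⟩ with hi0
  set i1 : Fin n := ⟨1, by omega⟩ with hi1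
  set i2 : Fin n := ⟨2, by omega⟩ with hi2
  set i3 : Fin n := ⟨3, by omega⟩ with hi3
  have h01 : i0 ≠ i1 := by simp [hi0, hi1, Fin.ext_iff]
  have h02 : i0 ≠ i2 := by simp [hi0, hi2, Fin.ext_iff]
  have h03 : i0 ≠ i3 := by simp [hi0, hi3, Fin.ext_iff]
  have h12 : i1 ≠ i2 := by simp [hi1, hi2, Fin.ext_iff]
  have h13 : i1 ≠ i3 := by simp [hi1, hi3, Fin.ext_iff]
  have h23 : i2 ≠ i3 := by simp [hi2, hi3, Fin.ext_iff]
  -- key: independence of column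
  have key : ∀ i q q' : Fin n, i ≠ i0 → q ≠ i0 → q ≠ i → q' ≠ i0 → q' ≠ i →
      u i q * u i0 q' = u i q' * u i0 q := by
    intro i q q' hi hq hqi hq' hq'i
    by_cases h : q = q'
    · subst h; ring
    · exact hflat i i0 q q' hi h hqi.symm hq'i.symm hq.symm hq'.symm
  set p : Fin n → Fin n := fun i => if i = i1 then i2 else i1 with hp
  have hp0 : ∀ i, p i ≠ i0 := by
    intro i; simp only [hp]; split
    · exact h02.symm
    · exact h01.symm
  have hpi : ∀ i, p i ≠ i := by
    intro i; simp only [hp]; split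
    · rename_i h; rw [h]; exact h12.symm
    · rename_i h; exact fun hc => h hc.symm
  set α : Fin n → k := fun i => if i = i0 then 1 else u i (p i) / u i0 (p i) with hα
  set β : Fin n → k := fun j =>
    if j = i0 then u i1 i0 / (u i1 (p i1) / u i0 (p i1)) else u i0 j with hβ
  have hαne : ∀ i, α i ≠ 0 := by
    intro i; simp only [hα]; split
    · exact one_ne_zero
    · rename_i h
      exact div_ne_zero (hu _ _ (hpi i).symm) (hu _ _ (hp0 i).symm)
  have hβne : ∀ j, β j ≠ 0 := by
    intro j; simp only [hβ]; split
    · exact div_ne_zero (hu _ _ h01.symm)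
        (div_ne_zero (hu _ _ (hpi i1).symm) (hu _ _ (hp0 i1).symm))
    · rename_i h
      exact hu _ _ (fun hc => h hc.symm)
  refine ⟨α, β, hαne, hβne, ?_⟩
  intro i j hij
  by_cases hi : i = i0
  · subst hi
    simp only [hα, hβ, if_pos rfl, if_neg (Ne.symm hij), one_mul]
  · by_cases hj : j = i0
    · subst hj
      simp only [hα, hβ, if_neg hi, if_pos rfl]
      have hpi1 : p i1 = i2 := by simp [hp]
      rw [hpi1]
      by_cases hi1 : i = i1
      · subst hi1
        have hb : u i1 i2 ≠ 0 := hu _ _ h12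
        have hc : u i0 i2 ≠ 0 := hu _ _ h02
        field_simp
        simp only [hpi1]
        field_simp
      · -- choose q ∉ {i0, i1, i}
        set q : Fin n := if i = i2 then i3 else i2 with hq
        have hq0 : q ≠ i0 := by simp only [hq]; split; exacts [h03.symm, h02.symm]
        have hq1 : q ≠ i1 := by simp only [hq]; split; exacts [h13.symm, h12.symm]
        have hqi' : q ≠ i := by
          simp only [hq]; split
          · rename_i h; rw [h]; exact h23.symm
          · rename_i h; exact fun hc => h hc.symm
        have E1 : u i (p i) * u i0 q = u i q * u i0 (p i) :=
          key i (p i) q hi (hp0 i) (hpi i) hq0 hqi'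
        have E2 : u i1 i2 * u i0 q = u i1 q * u i0 i2 :=
          key i1 i2 q h01.symm h02.symm h12.symm hq0 hq1
        have E3 : u i i0 * u i1 q = u i q * u i1 i0 :=
          hflat i i1 i0 q hi1 hq0.symm hi hqi'.symm h01.symm hq1.symm
        have hne1 : u i0 (p i) ≠ 0 := hu _ _ (hp0 i).symm
        have hne2 : u i1 i2 ≠ 0 := hu _ _ h12
        have hne3 : u i0 q ≠ 0 := hu _ _ hq0.symm
        have hne4 : u i1 q ≠ 0 := hu _ _ hq1.symm
        field_simp
        apply mul_left_cancel₀ (mul_ne_zero hne3 hne4)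
        ring_nf
        linear_combination (u i0 (p i) * u i1 i2 * u i0 q) * E3 +
          (u i q * u i1 i0 * u i0 (p i)) * E2 -
          (u i1 i0 * u i1 q * u i0 i2) * E1
    · -- i ≠ i0, j ≠ i0
      simp only [hα, hβ, if_neg hi, if_neg hj]
      by_cases hjp : j = p i
      · subst hjp
        rw [div_mul_eq_mul_div, mul_div_assoc, div_self (hu _ _ (hp0 i).symm), mul_one]
      · have E1 : u i (p i) * u i0 j = u i j * u i0 (p i) :=
          key i (p i) j hi (hp0 i) (hpi i) (fun hc => hj hc) (fun hc => hij hc.symm)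
        have hne1 : u i0 (p i) ≠ 0 := hu _ _ (hp0 i).symm
        field_simp
        linear_combination -E1
end

section
/- Let K be a valued field with residue field k admitting a splitting of the value group, and let B̃ be an r×r matrix over K whose valuation matrix M = val(B̃) has the property that exactly two permutations σ, τ ∈ S_r attain the minimum tropical weight w_min = min_π ∑_i M_{i,π(i)}. Then val(det B̃) > w_min if and only if sgn(σ)·∏_i lc(B̃_{i,σ(i)}) + sgn(τ)·∏_i lc(B̃_{i,τ(i)}) = 0 in k, where lc denotes the leading residue coefficient. -/
open Finset

/-- Two-minimum determinant criterion: for a matrix over a valued field (with a splitting, encoded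
by a compatible leading-coefficient map `lc` into the residue field) whose tropical weight minimum
is attained by exactly two permutations `σ, τ`, the valuation of the determinant exceeds the
minimum iff the two signed leading monomials cancel in the residue field. -/
theorem two_minimum_determinant_cancellation_criterion
    {K k : Type*} [Field K] [Field k]
    (val : K → WithTop ℤ) (lc : K → k)
    (hval0 : val 0 = ⊤)
    (hvalmul : ∀ x y, val (x * y) = val x + val y)
    (hvaladd : ∀ x y, min (val x) (val y) ≤ val (x + y))
    (hlc0 : ∀ x, lc x = 0 ↔ x = 0)
    (hlc1 : lc 1 = 1)
    (hlcmul : ∀ x y, lc (x * y) = lc x * lc y)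
    (hlc_add_eq : ∀ x y, x ≠ 0 → y ≠ 0 → val x = val y → lc x + lc y ≠ 0 →
      val (x + y) = val x ∧ lc (x + y) = lc x + lc y)
    (hlc_add_cancel : ∀ x y, x ≠ 0 → y ≠ 0 → val x = val y → lc x + lc y = 0 →
      val x < val (x + y))
    (hlc_add_lt : ∀ x y, x ≠ 0 → val x < val y →
      val (x + y) = val x ∧ lc (x + y) = lc x)
    (r : ℕ) (B : Matrix (Fin r) (Fin r) K) (hB : ∀ i j, B i j ≠ 0)
    (σ τ : Equiv.Perm (Fin r)) (hστ : σ ≠ τ)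
    (hweq : (∑ i, val (B i (σ i))) = ∑ i, val (B i (τ i)))
    (hmin : ∀ π : Equiv.Perm (Fin r), π ≠ σ → π ≠ τ →
      (∑ i, val (B i (σ i))) < ∑ i, val (B i (π i))) :
    (∑ i, val (B i (σ i))) < val B.det ↔
      (((Equiv.Perm.sign σ : ℤˣ) : ℤ) : k) * (∏ i, lc (B i (σ i)))
        + (((Equiv.Perm.sign τ : ℤˣ) : ℤ) : k) * (∏ i, lc (B i (τ i))) = 0 := by
  classical
  have hlc_zero : lc (0:K) = 0 := (hlc0 0).2 rfl
  have hlcne : ∀ x : K, x ≠ 0 → lc x ≠ 0 := fun x hx h => hx ((hlc0 x).1 h)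
  -- val x = ⊤ → x = 0
  have hvtop : ∀ x : K, val x = ⊤ → x = 0 := by
    intro x hx
    by_contra hx0
    have hnegx : (-x) ≠ 0 := neg_ne_zero.mpr hx0
    have hvneg : val (-x) = ⊤ := by
      have h := hvalmul (-1) x
      rw [show (-1 : K) * x = -x by ring] at h
      rw [h, hx, add_top]
    by_cases h : lc x + lc (-x) = 0
    · have h2 := hlc_add_cancel x (-x) hx0 hnegx (hx.trans hvneg.symm) h
      rw [add_neg_cancel, hval0, hx] at h2
      exact lt_irrefl _ h2
    · have h2 := (hlc_add_eq x (-x) hx0 hnegx (hx.trans hvneg.symm) h).2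
      rw [add_neg_cancel, hlc_zero] at h2
      exact h h2.symm
  have hvne : ∀ x : K, x ≠ 0 → val x ≠ ⊤ := fun x hx h => hx (hvtop x h)
  -- val 1 = 0
  have hv1 : val (1:K) = 0 := by
    have h := hvalmul 1 1
    rw [one_mul] at h
    have h1 : val (1:K) ≠ ⊤ := hvne 1 one_ne_zero
    lift val (1:K) to ℤ using h1 with a ha
    have h2 : a = a + a := by exact_mod_cast h
    have : a = 0 := by omega
    exact_mod_cast this
  -- val (-1) = 0
  have hvneg1 : val (-1:K) = 0 := by
    have h := hvalmul (-1) (-1)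
    rw [show (-1:K) * (-1) = 1 by ring, hv1] at h
    have h1 : val (-1:K) ≠ ⊤ := hvne _ (by norm_num)
    lift val (-1:K) to ℤ using h1 with a ha
    have h2 : (0:ℤ) = a + a := by exact_mod_cast h
    have : a = 0 := by omega
    exact_mod_cast this
  -- lc (-1) = -1
  have hlcneg1 : lc (-1:K) = -1 := by
    by_contra h
    have hne : lc (1:K) + lc (-1:K) ≠ 0 := by
      rw [hlc1]; intro h2; exact h (by linear_combination h2)
    have h2 := (hlc_add_eq 1 (-1) one_ne_zero (by norm_num)
      (hv1.trans hvneg1.symm) hne).1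
    rw [add_neg_cancel, hval0, hv1] at h2
    exact (by simp : ¬ ((⊤ : WithTop ℤ) = 0)) h2
  have hvneg : ∀ x : K, val (-x) = val x := by
    intro x
    rw [show -x = (-1:K) * x by ring, hvalmul, hvneg1, zero_add]
  have hlcneg : ∀ x : K, lc (-x) = - lc x := by
    intro x
    rw [show -x = (-1:K) * x by ring, hlcmul, hlcneg1, neg_one_mul]
  -- products
  have hval_prod : ∀ (f : Fin r → K), val (∏ i, f i) = ∑ i, val (f i) := by
    intro f
    induction (univ : Finset (Fin r)) using Finset.induction with
    | empty => simpa using hv1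
    | insert _ _ hx ih => rw [Finset.prod_insert hx, Finset.sum_insert hx, hvalmul, ih]
  have hlc_prod : ∀ (f : Fin r → K), lc (∏ i, f i) = ∏ i, lc (f i) := by
    intro f
    induction (univ : Finset (Fin r)) using Finset.induction with
    | empty => simpa using hlc1
    | insert _ _ hx ih => rw [Finset.prod_insert hx, Finset.prod_insert hx, hlcmul, ih]
  -- the Leibniz terms
  set t : Equiv.Perm (Fin r) → K :=
    fun π => (((Equiv.Perm.sign π : ℤˣ) : ℤ) : K) * ∏ i, B i (π i) with ht
  have htne : ∀ π, t π ≠ 0 := by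
    intro π
    rcases Int.units_eq_one_or (Equiv.Perm.sign π) with h | h <;>
      simp [ht, h, Finset.prod_eq_zero_iff, hB]
  have htval : ∀ π, val (t π) = ∑ i, val (B i (π i)) := by
    intro π
    rcases Int.units_eq_one_or (Equiv.Perm.sign π) with h | h <;>
      simp only [ht, h, Units.val_one, Units.val_neg, Int.cast_one, Int.cast_neg, one_mul,
        neg_one_mul]
    · exact hval_prod _
    · rw [hvneg]; exact hval_prod _
  have htlc : ∀ π, lc (t π) =
      (((Equiv.Perm.sign π : ℤˣ) : ℤ) : k) * ∏ i, lc (B i (π i)) := by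
    intro π
    rcases Int.units_eq_one_or (Equiv.Perm.sign π) with h | h <;>
      simp only [ht, h, Units.val_one, Units.val_neg, Int.cast_one, Int.cast_neg, one_mul,
        neg_one_mul]
    · exact hlc_prod _
    · rw [hlcneg, hlc_prod]
  -- weight
  set w : WithTop ℤ := ∑ i, val (B i (σ i)) with hw
  have hwtop : w < ⊤ := by
    rw [hw, lt_top_iff_ne_top]
    intro h
    rcases WithTop.sum_eq_top.mp h with ⟨i, _, hi⟩
    exact hvne _ (hB i (σ i)) hi
  -- determinant expansion
  have hdet : B.det = (t σ + t τ) + ∑ π ∈ (univ \ {σ, τ} : Finset (Equiv.Perm (Fin r))), t π := by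
    rw [← Matrix.det_transpose, Matrix.det_apply',
      ← Finset.sum_sdiff (Finset.subset_univ ({σ, τ} : Finset (Equiv.Perm (Fin r)))),
      Finset.sum_pair hστ]
    simp only [ht, Matrix.transpose_apply]
    ring
  -- the tail is strictly above w
  have htail : ∀ (s : Finset (Equiv.Perm (Fin r))),
      (s ⊆ univ \ {σ, τ}) → w < val (∑ π ∈ s, t π) := by
    intro s
    induction s using Finset.induction with
    | empty => intro _; rw [Finset.sum_empty, hval0]; exact hwtop
    | @insert a s' hx ih =>
      intro hs
      rw [Finset.sum_insert hx]
      have ha : a ∈ univ \ ({σ, τ} : Finset (Equiv.Perm (Fin r))) :=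
        hs (Finset.mem_insert_self a s')
      rw [Finset.mem_sdiff, Finset.mem_insert, Finset.mem_singleton] at ha
      push_neg at ha
      have h1 : w < val (t a) := by rw [htval]; exact hmin a ha.2.1 ha.2.2
      have h2 : w < val (∑ π ∈ s', t π) :=
        ih (Finset.Subset.trans (Finset.subset_insert a s') hs)
      exact lt_of_lt_of_le (lt_min h1 h2) (hvaladd _ _)
  have hS : w < val (∑ π ∈ (univ \ {σ, τ} : Finset (Equiv.Perm (Fin r))), t π) :=
    htail _ (Finset.Subset.refl _)
  have hvtσ : val (t σ) = w := htval σ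
  have hvtτ : val (t τ) = w := (htval τ).trans hweq.symm
  have hRHS : (((Equiv.Perm.sign σ : ℤˣ) : ℤ) : k) * (∏ i, lc (B i (σ i)))
        + (((Equiv.Perm.sign τ : ℤˣ) : ℤ) : k) * (∏ i, lc (B i (τ i)))
      = lc (t σ) + lc (t τ) := by rw [htlc, htlc]
  rw [hRHS]
  by_cases hA : lc (t σ) + lc (t τ) = 0
  · -- cancellation: both sides true
    have hT : w < val (t σ + t τ) := by
      have := hlc_add_cancel (t σ) (t τ) (htne σ) (htne τ) (hvtσ.trans hvtτ.symm) hA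
      rwa [hvtσ] at this
    have : w < val B.det := by
      rw [hdet]
      exact lt_of_lt_of_le (lt_min hT hS) (hvaladd _ _)
    exact iff_of_true this hA
  · -- no cancellation: both sides false
    have hTeq := hlc_add_eq (t σ) (t τ) (htne σ) (htne τ) (hvtσ.trans hvtτ.symm) hA
    have hTne : t σ + t τ ≠ 0 := by
      intro h
      exact hA (hTeq.2 ▸ h ▸ hlc_zero)
    have hvT : val (t σ + t τ) = w := hTeq.1.trans hvtσ
    have hfin := (hlc_add_lt (t σ + t τ)
      (∑ π ∈ (univ \ {σ, τ} : Finset (Equiv.Perm (Fin r))), t π) hTne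
      (by rw [hvT]; exact hS)).1
    rw [← hdet, hvT] at hfin
    exact iff_of_false (by rw [hfin]; exact lt_irrefl w) hA
end
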